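/- For a real number g with 1 + 12g > 0 and g ≠ 0, set a(g) = (√(1+12g) − 1)/(6g) and m_2(g) = (4·a(g) − a(g)^2)/3. Then lim_{g → (−1/12)^+} √(g + 1/12) · m_2''(g) = 48·√3, where m_2'' denotes the second derivative of m_2 with respect to g. In particular the second derivative of m_2 diverges at the critical point g_c = −1/12 like (g − g_c)^{−1/2}, corresponding to string susceptibility exponent γ = −1/2. -/

import Mathlib

open Filter Topology

/-- The function a(g) of the quartic one-matrix model. -/
noncomputable def quarticA (g : ℝ) : ℝ := (Real.sqrt (1 + 12 * g) - 1) / (6 * g)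

/-- The limiting second moment m₂(g) of the quartic one-matrix model. -/
noncomputable def quarticM2 (g : ℝ) : ℝ := (4 * quarticA g - (quarticA g) ^ 2) / 3

/-!
Writing `s = √(1 + 12 g)`, rationalising gives `a = 2 / (1 + s)`, hence
`m₂ = (4 + 8 s) / (3 (1 + s)²)`. Since `s' = 6 / s`, differentiating twice yields
`m₂'' = 288 / (s (1 + s)⁴)`, and `s = 2√3 · √(g + 1/12)` turns
`√(g + 1/12) · m₂''` into `48√3 / (1 + s)⁴`, which tends to `48√3` as `s → 0`.
-/

noncomputable def quarticRoot (g : ℝ) : ℝ := √(1 + 12 * g)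

lemma quarticRoot_nonneg (g : ℝ) : 0 ≤ quarticRoot g := Real.sqrt_nonneg _

lemma quarticRoot_pos {g : ℝ} (h : 0 < 1 + 12 * g) : 0 < quarticRoot g := Real.sqrt_pos.2 h

lemma one_add_quarticRoot_pos (g : ℝ) : 0 < 1 + quarticRoot g := by
  linarith [quarticRoot_nonneg g]

lemma quarticRoot_eq_mul_sqrt {g : ℝ} (h : 0 ≤ g + 1 / 12) :
    quarticRoot g = 2 * √3 * √(g + 1 / 12) := by
  rw [quarticRoot, Real.sqrt_eq_iff_eq_sq (by linarith) (by positivity), mul_pow, mul_pow,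
    Real.sq_sqrt (by norm_num), Real.sq_sqrt h]
  ring

lemma hasDerivAt_quarticRoot {g : ℝ} (h : 0 < 1 + 12 * g) :
    HasDerivAt quarticRoot (6 / quarticRoot g) g := by
  have hlin : HasDerivAt (fun x : ℝ => 1 + 12 * x) 12 g := by
    simpa using ((hasDerivAt_id g).const_mul 12).const_add 1
  refine ((Real.hasDerivAt_sqrt h.ne').comp g hlin).congr_deriv ?_
  have := quarticRoot_pos h
  unfold quarticRoot at this ⊢
  field_simp
  ring

lemma quarticA_eq_two_div {g : ℝ} (h : 0 ≤ 1 + 12 * g) (hg : g ≠ 0) :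
    quarticA g = 2 / (1 + quarticRoot g) := by
  rw [quarticA, div_eq_div_iff (by positivity) (one_add_quarticRoot_pos g).ne']
  unfold quarticRoot
  linear_combination Real.sq_sqrt h

lemma quarticM2_eq_closedForm {g : ℝ} (h : 0 ≤ 1 + 12 * g) (hg : g ≠ 0) :
    quarticM2 g = (4 + 8 * quarticRoot g) / (3 * (1 + quarticRoot g) ^ 2) := by
  have := one_add_quarticRoot_pos g
  rw [quarticM2, quarticA_eq_two_div h hg]
  field_simp
  ring

lemma hasDerivAt_quarticM2_closedForm {g : ℝ} (h : 0 < 1 + 12 * g) :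
    HasDerivAt (fun x => (4 + 8 * quarticRoot x) / (3 * (1 + quarticRoot x) ^ 2))
      (-16 / (1 + quarticRoot g) ^ 3) g := by
  have hr := hasDerivAt_quarticRoot h
  have := quarticRoot_pos h
  have hpos := one_add_quarticRoot_pos g
  refine (((hr.const_mul 8).const_add 4).fun_div (((hr.const_add 1).fun_pow 2).const_mul 3)
    (by positivity)).congr_deriv ?_
  field_simp
  ring

lemma hasDerivAt_deriv_quarticM2_closedForm {g : ℝ} (h : 0 < 1 + 12 * g) :
    HasDerivAt (fun x => -16 / (1 + quarticRoot x) ^ 3)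
      (288 / (quarticRoot g * (1 + quarticRoot g) ^ 4)) g := by
  have := quarticRoot_pos h
  have hpos := one_add_quarticRoot_pos g
  refine ((hasDerivAt_const g (-16 : ℝ)).fun_div
    (((hasDerivAt_quarticRoot h).const_add 1).fun_pow 3) (by positivity)).congr_deriv ?_
  field_simp
  ring

lemma quarticRegularSet_mem_nhds {g : ℝ} (h : 0 < 1 + 12 * g) (hg : g ≠ 0) :
    {x : ℝ | 0 < 1 + 12 * x} ∩ {x | x ≠ 0} ∈ 𝓝 g :=
  ((isOpen_lt continuous_const (by fun_prop)).inter isOpen_ne).mem_nhds ⟨h, hg⟩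

lemma deriv_quarticM2 {g : ℝ} (h : 0 < 1 + 12 * g) (hg : g ≠ 0) :
    deriv quarticM2 g = -16 / (1 + quarticRoot g) ^ 3 := by
  have hev : quarticM2 =ᶠ[𝓝 g]
      fun x => (4 + 8 * quarticRoot x) / (3 * (1 + quarticRoot x) ^ 2) :=
    eventually_of_mem (quarticRegularSet_mem_nhds h hg) fun x hx =>
      quarticM2_eq_closedForm hx.1.le hx.2
  rw [hev.deriv_eq, (hasDerivAt_quarticM2_closedForm h).deriv]

lemma deriv_deriv_quarticM2 {g : ℝ} (h : 0 < 1 + 12 * g) (hg : g ≠ 0) :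
    deriv (deriv quarticM2) g = 288 / (quarticRoot g * (1 + quarticRoot g) ^ 4) := by
  have hev : deriv quarticM2 =ᶠ[𝓝 g] fun x => -16 / (1 + quarticRoot x) ^ 3 :=
    eventually_of_mem (quarticRegularSet_mem_nhds h hg) fun x hx => deriv_quarticM2 hx.1 hx.2
  rw [hev.deriv_eq, (hasDerivAt_deriv_quarticM2_closedForm h).deriv]

lemma sqrt_mul_deriv_deriv_quarticM2 {g : ℝ} (h : 0 < g + 1 / 12) (hg : g ≠ 0) :
    √(g + 1 / 12) * deriv (deriv quarticM2) g = 48 * √3 / (1 + quarticRoot g) ^ 4 := by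
  rw [deriv_deriv_quarticM2 (by linarith) hg, quarticRoot_eq_mul_sqrt h.le]
  have h3 : √3 ^ 2 = 3 := Real.sq_sqrt (by norm_num)
  have : 0 < √3 := by positivity
  have : 0 < √(g + 1 / 12) := Real.sqrt_pos.2 h
  have := one_add_quarticRoot_pos g
  generalize √(g + 1 / 12) = t at *
  generalize √3 = r at *
  field_simp
  linear_combination -96 * h3

lemma tendsto_quarticRoot_nhds_critical : Tendsto quarticRoot (𝓝 (-1 / 12)) (𝓝 0) := by
  have hc : Continuous quarticRoot := by unfold quarticRoot; fun_prop
  convert hc.tendsto (-1 / 12)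
  norm_num [quarticRoot]

/-- The second derivative of m₂ diverges like (g − g_c)^{−1/2} at the critical
point g_c = −1/12: √(g + 1/12) · m₂''(g) → 48√3 as g → (−1/12)⁺, corresponding
to string susceptibility exponent γ = −1/2. -/
theorem stmt_6 :
    Filter.Tendsto
      (fun g : ℝ => Real.sqrt (g + 1 / 12) * deriv (deriv quarticM2) g)
      (𝓝[>] (-1 / 12))
      (𝓝 (48 * Real.sqrt 3)) := by
  have hnear : Set.Ioo (-1 / 12 : ℝ) 0 ∈ 𝓝[>] (-1 / 12 : ℝ) :=
    Ioo_mem_nhdsGT (by norm_num)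
  have hcongr : (fun g => 48 * √3 / (1 + quarticRoot g) ^ 4) =ᶠ[𝓝[>] (-1 / 12)]
      fun g => √(g + 1 / 12) * deriv (deriv quarticM2) g := by
    filter_upwards [hnear] with g hg
    exact (sqrt_mul_deriv_deriv_quarticM2 (by linarith [hg.1]) hg.2.ne).symm
  refine Tendsto.congr' hcongr ?_
  have hlim : Tendsto (fun g => 48 * √3 / (1 + quarticRoot g) ^ 4) (𝓝 (-1 / 12))
      (𝓝 (48 * √3 / (1 + 0) ^ 4)) :=
    tendsto_const_nhds.div ((tendsto_quarticRoot_nhds_critical.const_add 1).pow 4) (by norm_num)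
  simpa using hlim.mono_left nhdsWithin_le_nhds
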